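/- Let q(t) = (α - k^c - M^f β)/(2β) - ((b - k^c)/(2β))·e^{r(t - T^f - T^c)} for t ∈ [0, T^f], with r, β > 0, T^f ≤ T^c. If b·(2 - e^{-rT^c}) > α - M^f β + k^c·(1 - e^{-rT^c}), then q(t) > (α - b - M^f β)/β for every t < T^f, and consequently the implied price α - β(q(t) + M^f) < b for all t < T^f. -/
import Mathlib


open Real

/-- In the simultaneous-extraction phase, under
`b(2 - e^{-rT^c}) > α - M^f β + kc(1 - e^{-rT^c})`, the interior maximizer
`q(t) = (α - kc - M^f β)/(2β) - ((b - kc)/(2β)) e^{r(t - T^f - T^c)}` stays strictly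
above `(α - b - M^f β)/β` for every `t < T^f`, so the implied price
`α - β(q(t) + M^f)` is strictly below `b`. -/
theorem interior_control_above_bound (r β Mf b kc α Tf Tc : ℝ)
    (hr : 0 < r) (hβ : 0 < β) (hMf : 0 < Mf) (hkcb : kc < b) (hbα : b < α)
    (hTf0 : 0 ≤ Tf) (hTfTc : Tf ≤ Tc)
    (hcond : b * (2 - Real.exp (-r * Tc)) > α - Mf * β + kc * (1 - Real.exp (-r * Tc))) :
    ∀ t < Tf,
      (α - kc - Mf * β) / (2 * β) - ((b - kc) / (2 * β)) * Real.exp (r * (t - Tf - Tc))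
        > (α - b - Mf * β) / β ∧
      α - β * (((α - kc - Mf * β) / (2 * β)
          - ((b - kc) / (2 * β)) * Real.exp (r * (t - Tf - Tc))) + Mf) < b := by
  intro t ht
  set E := Real.exp (r * (t - Tf - Tc)) with hE
  have hEpos : 0 < E := Real.exp_pos _
  have he : E < Real.exp (-r * Tc) := by
    apply Real.exp_lt_exp.mpr
    nlinarith
  have hbkc : 0 < b - kc := by linarith
  have key : (α - b - Mf * β) * 2 < (α - kc - Mf * β) - (b - kc) * E := by
    nlinarith [mul_lt_mul_of_pos_left he hbkc]
  have hq : (α - kc - Mf * β) / (2 * β) - ((b - kc) / (2 * β)) * E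
      = ((α - kc - Mf * β) - (b - kc) * E) / (2 * β) := by ring
  have h1 : (α - b - Mf * β) / β < ((α - kc - Mf * β) - (b - kc) * E) / (2 * β) := by
    rw [div_lt_div_iff₀ hβ (by positivity)]
    nlinarith
  have hfirst : (α - kc - Mf * β) / (2 * β) - ((b - kc) / (2 * β)) * E
      > (α - b - Mf * β) / β := by rw [hq]; exact h1
  refine ⟨hfirst, ?_⟩
  have h2 : (α - b - Mf * β) < ((α - kc - Mf * β) / (2 * β) - ((b - kc) / (2 * β)) * E) * β :=
    (div_lt_iff₀ hβ).mp hfirst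
  nlinarith
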